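/- Let Z_1,...,Z_K and ε_1,...,ε_K be random variables such that all 2K variables are independent, the Z_i are i.i.d. centered Gaussian, the ε_i are i.i.d. centered Gaussian, let α ∈ ℝ, and let K ≥ 2. Then Var( (1/K) Σ_{i=1}^K (Z_i − α Z_i) ) · Var( (1/K) Σ_{i=1}^K ε_i ) ≤ Var( (1/K) Σ_{i=1}^K ε_i · ( (1/(K−1)) Σ_{j≠i} Z_j − α Z_i ) ). -/

import Mathlib

open MeasureTheory ProbabilityTheory Finset
open scoped NNReal

/-! With `W i = (K - 1)⁻¹ ∑_{j ≠ i} Z j - α Z i`, the `ε i` are centred, pairwise independent and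
independent of the whole vector `Z`, so the products `ε i * W i` are pairwise uncorrelated and the
right-hand side equals `K⁻² ∑ Var(ε i) E[W i ²] = K⁻¹ vε vZ ((K - 1)⁻¹ + α²)`. The left-hand side is
`K⁻² (1 - α)² vZ vε`, so the claim reduces to `(1 - α)² / K ≤ (K - 1)⁻¹ + α²`, whose gap is
`(1 + (K - 1) α)² / (K (K - 1))`. -/

lemma one_sub_sq_div_le_inv_sub_one_add_sq {K : ℝ} (hK : 1 < K) (α : ℝ) :
    (1 - α) ^ 2 / K ≤ (K - 1)⁻¹ + α ^ 2 := by
  have hK₁ : 0 < K - 1 := sub_pos.2 hK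
  have hgap : K * ((K - 1)⁻¹ + α ^ 2) - (1 - α) ^ 2 = (1 + (K - 1) * α) ^ 2 / (K - 1) := by
    field_simp
    ring
  rw [div_le_iff₀ (by linarith)]
  linarith [div_nonneg (sq_nonneg (1 + (K - 1) * α)) hK₁.le]

namespace ProbabilityTheory

variable {Ω : Type*} [MeasurableSpace Ω] {μ : Measure Ω}

lemma HasLaw.of_map_eq {𝓧 : Type*} [MeasurableSpace 𝓧] {ν : Measure 𝓧} [IsProbabilityMeasure ν]
    {X : Ω → 𝓧} (h : μ.map X = ν) : HasLaw X ν μ :=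
  ⟨.of_map_ne_zero (h ▸ IsProbabilityMeasure.ne_zero ν), h⟩

lemma iIndepFun.indepFun_sumElim {ι κ β : Type*} [Fintype ι] [Fintype κ] [MeasurableSpace β]
    {f : ι → Ω → β} {g : κ → Ω → β} (h : iIndepFun (Sum.elim f g) μ)
    (hf : ∀ i, AEMeasurable (f i) μ) (hg : ∀ j, AEMeasurable (g j) μ) :
    (fun ω i ↦ f i ω) ⟂ᵢ[μ] (fun ω j ↦ g j ω) := by
  have := h.indepFun_finset₀ _ _ (disjoint_map_inl_map_inr univ univ) (Sum.forall.2 ⟨hf, hg⟩)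
  exact this.comp
    (measurable_pi_lambda (fun x i ↦ x ⟨.inl i, by simp⟩) fun i ↦ measurable_pi_apply _)
    (measurable_pi_lambda (fun x j ↦ x ⟨.inr j, by simp⟩) fun j ↦ measurable_pi_apply _)

lemma IndepFun.memLp_two_mul {X Y : Ω → ℝ} (h : X ⟂ᵢ[μ] Y) (hX : MemLp X 2 μ)
    (hY : MemLp Y 2 μ) : MemLp (fun ω ↦ X ω * Y ω) 2 μ := by
  refine (memLp_two_iff_integrable_sq (hX.1.mul hY.1)).2 ?_
  refine ((h.comp (measurable_id.pow_const 2) (measurable_id.pow_const 2)).integrable_mul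
    hX.integrable_sq hY.integrable_sq).congr (ae_of_all _ fun ω ↦ ?_)
  simp only [Pi.mul_apply, Function.comp_apply, id, mul_pow]

section FiniteMeasure

variable [IsFiniteMeasure μ] {ι : Type*} {s : Finset ι} {X : ι → Ω → ℝ}

lemma variance_fun_sum_of_covariance_eq_zero (hX : ∀ i ∈ s, MemLp (X i) 2 μ)
    (h : (s : Set ι).Pairwise fun i j ↦ cov[X i, X j; μ] = 0) :
    Var[fun ω ↦ ∑ i ∈ s, X i ω; μ] = ∑ i ∈ s, Var[X i; μ] := by
  rw [variance_fun_sum' hX]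
  refine sum_congr rfl fun i hi ↦ ?_
  rw [sum_eq_single_of_mem i hi fun j hj hji ↦ h hi hj hji.symm,
    covariance_self (hX i hi).aemeasurable]

lemma variance_fun_sum_eq_card_mul_of_indepFun {v : ℝ} (hX : ∀ i ∈ s, MemLp (X i) 2 μ)
    (hXX : (s : Set ι).Pairwise fun i j ↦ X i ⟂ᵢ[μ] X j) (hv : ∀ i ∈ s, Var[X i; μ] = v) :
    Var[fun ω ↦ ∑ i ∈ s, X i ω; μ] = #s * v := by
  rw [variance_fun_sum_of_covariance_eq_zero hX fun i hi j hj hij ↦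
      (hXX hi hj hij).covariance_eq_zero (hX i hi) (hX j hj),
    sum_congr rfl hv, sum_const, nsmul_eq_mul]

end FiniteMeasure

lemma covariance_mul_mul_of_indepFun [IsProbabilityMeasure μ] {X₁ X₂ Y₁ Y₂ : Ω → ℝ}
    (h : (fun ω ↦ (X₁ ω, X₂ ω)) ⟂ᵢ[μ] (fun ω ↦ (Y₁ ω, Y₂ ω)))
    (hX₁ : MemLp X₁ 2 μ) (hX₂ : MemLp X₂ 2 μ) (hY₁ : MemLp Y₁ 2 μ) (hY₂ : MemLp Y₂ 2 μ)
    (hX₁0 : μ[X₁] = 0) :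
    cov[fun ω ↦ X₁ ω * Y₁ ω, fun ω ↦ X₂ ω * Y₂ ω; μ] =
      (∫ ω, X₁ ω * X₂ ω ∂μ) * ∫ ω, Y₁ ω * Y₂ ω ∂μ := by
  have h₁ : X₁ ⟂ᵢ[μ] Y₁ := h.comp measurable_fst measurable_fst
  have h₂ : X₂ ⟂ᵢ[μ] Y₂ := h.comp measurable_snd measurable_snd
  have h₁₂ : (fun ω ↦ X₁ ω * X₂ ω) ⟂ᵢ[μ] (fun ω ↦ Y₁ ω * Y₂ ω) :=
    h.comp (measurable_fst.mul measurable_snd) (measurable_fst.mul measurable_snd)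
  rw [covariance_eq_sub (h₁.memLp_two_mul hX₁ hY₁) (h₂.memLp_two_mul hX₂ hY₂),
    h₁.integral_fun_mul_eq_mul_integral hX₁.1 hY₁.1, hX₁0, zero_mul, zero_mul, sub_zero,
    ← h₁₂.integral_fun_mul_eq_mul_integral (hX₁.1.mul hX₂.1) (hY₁.1.mul hY₂.1)]
  exact integral_congr_ae (ae_of_all _ fun ω ↦ by simp only [Pi.mul_apply]; ring)

lemma variance_fun_sum_mul_of_indepFun [IsProbabilityMeasure μ] {ι : Type*} [Fintype ι]
    {ε W : ι → Ω → ℝ} (hε : ∀ i, MemLp (ε i) 2 μ) (hW : ∀ i, MemLp (W i) 2 μ)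
    (hε0 : ∀ i, μ[ε i] = 0) (hεε : Pairwise fun i j ↦ ε i ⟂ᵢ[μ] ε j)
    (hεW : (fun ω i ↦ ε i ω) ⟂ᵢ[μ] (fun ω i ↦ W i ω)) :
    Var[fun ω ↦ ∑ i, ε i ω * W i ω; μ] = ∑ i, Var[ε i; μ] * ∫ ω, W i ω ^ 2 ∂μ := by
  have hpair (i j : ι) : (fun ω ↦ (ε i ω, ε j ω)) ⟂ᵢ[μ] (fun ω ↦ (W i ω, W j ω)) :=
    hεW.comp ((measurable_pi_apply i).prodMk (measurable_pi_apply j))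
      ((measurable_pi_apply i).prodMk (measurable_pi_apply j))
  have hcov (i j : ι) := covariance_mul_mul_of_indepFun (hpair i j) (hε i) (hε j) (hW i) (hW j)
    (hε0 i)
  have hεiWi (i : ι) : ε i ⟂ᵢ[μ] W i := hεW.comp (measurable_pi_apply i) (measurable_pi_apply i)
  rw [variance_fun_sum_of_covariance_eq_zero (X := fun i ω ↦ ε i ω * W i ω)
    (fun i _ ↦ (hεiWi i).memLp_two_mul (hε i) (hW i))
    fun i _ j _ hij ↦ (hcov i j).trans <| by
      rw [(hεε hij).integral_fun_mul_eq_mul_integral (hε i).1 (hε j).1, hε0, zero_mul,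
        zero_mul]]
  refine sum_congr rfl fun i _ ↦ ?_
  rw [← covariance_self (X := fun ω ↦ ε i ω * W i ω) ((hε i).1.mul (hW i).1).aemeasurable,
    hcov, variance_of_integral_eq_zero (hε i).1.aemeasurable (hε0 i)]
  simp only [sq]

section LeaveOneOut

variable {ι : Type*} [Fintype ι] [DecidableEq ι]

def leaveOneOutContrast (a b : ℝ) (Z : ι → Ω → ℝ) (i : ι) : Ω → ℝ :=
  fun ω ↦ a * ∑ j ∈ univ.erase i, Z j ω - b * Z i ω

variable {Z : ι → Ω → ℝ}

lemma IndepFun.comp_leaveOneOutContrast {β : Type*} [MeasurableSpace β] {Y : Ω → β}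
    (h : Y ⟂ᵢ[μ] (fun ω j ↦ Z j ω)) (a b : ℝ) :
    Y ⟂ᵢ[μ] (fun ω i ↦ leaveOneOutContrast a b Z i ω) := by
  have hψ : Measurable fun (z : ι → ℝ) i ↦ leaveOneOutContrast a b (fun j z ↦ z j) i z := by
    unfold leaveOneOutContrast
    fun_prop
  exact h.comp measurable_id hψ

lemma memLp_leaveOneOutContrast (a b : ℝ) (hZ : ∀ i, MemLp (Z i) 2 μ) (i : ι) :
    MemLp (leaveOneOutContrast a b Z i) 2 μ :=
  ((memLp_finsetSum _ fun j _ ↦ hZ j).const_mul a).sub ((hZ i).const_mul b)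

lemma integral_leaveOneOutContrast (a b : ℝ) (hZ : ∀ i, Integrable (Z i) μ)
    (hZ0 : ∀ i, μ[Z i] = 0) (i : ι) : μ[leaveOneOutContrast a b Z i] = 0 := by
  simp only [leaveOneOutContrast]
  rw [integral_sub ((integrable_finsetSum _ fun j _ ↦ hZ j).const_mul a) ((hZ i).const_mul b),
    integral_const_mul, integral_const_mul, integral_finsetSum _ fun j _ ↦ hZ j]
  simp [hZ0]

variable [IsFiniteMeasure μ] {v : ℝ}

lemma variance_leaveOneOutContrast (a b : ℝ) (hZ : ∀ i, MemLp (Z i) 2 μ)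
    (hZZ : Pairwise fun i j ↦ Z i ⟂ᵢ[μ] Z j) (hv : ∀ i, Var[Z i; μ] = v) (i : ι) :
    Var[leaveOneOutContrast a b Z i; μ] = (a ^ 2 * (Fintype.card ι - 1) + b ^ 2) * v := by
  have hS := memLp_finsetSum (univ.erase i) fun j _ ↦ hZ j
  have hcov : cov[fun ω ↦ ∑ j ∈ univ.erase i, Z j ω, Z i; μ] = 0 := by
    rw [covariance_fun_sum_left' (fun j _ ↦ hZ j) (hZ i)]
    exact sum_eq_zero fun j hj ↦ (hZZ (ne_of_mem_erase hj)).covariance_eq_zero (hZ j) (hZ i)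
  have hvarS : Var[fun ω ↦ ∑ j ∈ univ.erase i, Z j ω; μ] = (Fintype.card ι - 1) * v := by
    rw [variance_fun_sum_eq_card_mul_of_indepFun (fun j _ ↦ hZ j) (fun j _ k _ hjk ↦ hZZ hjk)
      fun j _ ↦ hv j, card_erase_of_mem (mem_univ i), card_univ,
      Nat.cast_pred (Fintype.card_pos_iff.2 ⟨i⟩)]
  unfold leaveOneOutContrast
  rw [variance_fun_sub (hS.const_mul a) ((hZ i).const_mul b), covariance_const_mul_left,
    covariance_const_mul_right, hcov, variance_const_mul, variance_const_mul, hvarS, hv]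
  ring

lemma integral_leaveOneOutContrast_sq (a b : ℝ) (hZ : ∀ i, MemLp (Z i) 2 μ)
    (hZ0 : ∀ i, μ[Z i] = 0) (hZZ : Pairwise fun i j ↦ Z i ⟂ᵢ[μ] Z j)
    (hv : ∀ i, Var[Z i; μ] = v) (i : ι) :
    ∫ ω, leaveOneOutContrast a b Z i ω ^ 2 ∂μ = (a ^ 2 * (Fintype.card ι - 1) + b ^ 2) * v := by
  rw [← variance_of_integral_eq_zero (memLp_leaveOneOutContrast a b hZ i).1.aemeasurable
    (integral_leaveOneOutContrast a b (fun j ↦ (hZ j).integrable one_le_two) hZ0 i),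
    variance_leaveOneOutContrast a b hZ hZZ hv i]

end LeaveOneOut

theorem variance_crossterm_ineq_of_centered [IsProbabilityMeasure μ] {K : ℕ} (hK : 2 ≤ K)
    {Z ε : Fin K → Ω → ℝ} (α : ℝ) {vZ vε : ℝ≥0} (hindep : iIndepFun (Sum.elim Z ε) μ)
    (hZ : ∀ i, MemLp (Z i) 2 μ) (hε : ∀ i, MemLp (ε i) 2 μ)
    (hZ0 : ∀ i, μ[Z i] = 0) (hε0 : ∀ i, μ[ε i] = 0)
    (hZv : ∀ i, Var[Z i; μ] = vZ) (hεv : ∀ i, Var[ε i; μ] = vε) :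
    Var[fun ω ↦ (K : ℝ)⁻¹ * ∑ i, (Z i ω - α * Z i ω); μ] *
        Var[fun ω ↦ (K : ℝ)⁻¹ * ∑ i, ε i ω; μ] ≤
      Var[fun ω ↦ (K : ℝ)⁻¹ * ∑ i, ε i ω *
        (((K : ℝ) - 1)⁻¹ * ∑ j ∈ univ.erase i, Z j ω - α * Z i ω); μ] := by
  have hZZ : Pairwise fun i j ↦ Z i ⟂ᵢ[μ] Z j := fun i j hij ↦
    hindep.indepFun (Sum.inl_injective.ne hij)
  have hεε : Pairwise fun i j ↦ ε i ⟂ᵢ[μ] ε j := fun i j hij ↦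
    hindep.indepFun (Sum.inr_injective.ne hij)
  have hεW := ((hindep.indepFun_sumElim (fun i ↦ (hZ i).aemeasurable)
    fun i ↦ (hε i).aemeasurable).symm.comp_leaveOneOutContrast ((K : ℝ) - 1)⁻¹ α)
  have hvarZ : Var[fun ω ↦ ∑ i, (1 - α) * Z i ω; μ] = K * ((1 - α) ^ 2 * vZ) := by
    simpa using variance_fun_sum_eq_card_mul_of_indepFun (s := univ)
      (fun i _ ↦ (hZ i).const_mul (1 - α))
      (fun i _ j _ hij ↦ (hZZ hij).comp (measurable_const_mul _) (measurable_const_mul _))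
      fun i _ ↦ by rw [variance_const_mul, hZv]
  have hvarε : Var[fun ω ↦ ∑ i, ε i ω; μ] = K * vε := by
    simpa using variance_fun_sum_eq_card_mul_of_indepFun (s := univ) (fun i _ ↦ hε i)
      (fun i _ j _ hij ↦ hεε hij) fun i _ ↦ hεv i
  have hK₁ : (1 : ℝ) < K := by exact_mod_cast hK
  have hvarεW : Var[fun ω ↦ ∑ i, ε i ω * leaveOneOutContrast ((K : ℝ) - 1)⁻¹ α Z i ω; μ] =
      K * (vε * vZ * (((K : ℝ) - 1)⁻¹ + α ^ 2)) := by
    rw [variance_fun_sum_mul_of_indepFun hε (memLp_leaveOneOutContrast _ _ hZ) hε0 hεε hεW]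
    simp only [hεv, integral_leaveOneOutContrast_sq _ _ hZ hZ0 hZZ hZv, sum_const, card_univ,
      Fintype.card_fin, nsmul_eq_mul]
    field_simp [(sub_pos.2 hK₁).ne']
  simp_rw [← one_sub_mul]
  change _ ≤ Var[fun ω ↦ (K : ℝ)⁻¹ * ∑ i, ε i ω * leaveOneOutContrast ((K : ℝ) - 1)⁻¹ α Z i ω; μ]
  rw [variance_const_mul, variance_const_mul, variance_const_mul, hvarZ, hvarε, hvarεW]
  calc (K : ℝ)⁻¹ ^ 2 * (K * ((1 - α) ^ 2 * vZ)) * ((K : ℝ)⁻¹ ^ 2 * (K * vε))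
      = vε * vZ / K * ((1 - α) ^ 2 / K) := by field_simp
    _ ≤ vε * vZ / K * (((K : ℝ) - 1)⁻¹ + α ^ 2) := by
      gcongr
      exact one_sub_sq_div_le_inv_sub_one_add_sq hK₁ α
    _ = (K : ℝ)⁻¹ ^ 2 * (K * (vε * vZ * (((K : ℝ) - 1)⁻¹ + α ^ 2))) := by field_simp

end ProbabilityTheory

theorem variance_crossterm_ineq_gaussian_general
    {Ω : Type*} [MeasurableSpace Ω] (μ : Measure Ω) [IsProbabilityMeasure μ]
    (K : ℕ) (hK : 2 ≤ K) (Z ε : Fin K → Ω → ℝ) (α : ℝ)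
    (hindep : iIndepFun (Sum.elim Z ε) μ)
    (vZ vε : ℝ≥0)
    (hgaussZ : ∀ i, μ.map (Z i) = gaussianReal 0 vZ)
    (hgaussε : ∀ i, μ.map (ε i) = gaussianReal 0 vε) :
    variance (fun ω => (K : ℝ)⁻¹ * ∑ i, (Z i ω - α * Z i ω)) μ *
        variance (fun ω => (K : ℝ)⁻¹ * ∑ i, ε i ω) μ ≤
      variance (fun ω => (K : ℝ)⁻¹ * ∑ i, ε i ω *
        (((K : ℝ) - 1)⁻¹ * ∑ j ∈ Finset.univ.erase i, Z j ω - α * Z i ω)) μ := by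
  have hZ i : HasLaw (Z i) (gaussianReal 0 vZ) μ := .of_map_eq (hgaussZ i)
  have hε i : HasLaw (ε i) (gaussianReal 0 vε) μ := .of_map_eq (hgaussε i)
  exact variance_crossterm_ineq_of_centered hK α hindep
    (fun i ↦ (hZ i).hasGaussianLaw.memLp_two) (fun i ↦ (hε i).hasGaussianLaw.memLp_two)
    (fun i ↦ (hZ i).integral_eq.trans integral_id_gaussianReal)
    (fun i ↦ (hε i).integral_eq.trans integral_id_gaussianReal)
    (fun i ↦ (hZ i).variance_eq.trans variance_id_gaussianReal)
    (fun i ↦ (hε i).variance_eq.trans variance_id_gaussianReal)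

/-- **Cross-term inequality from the proof of Lemma 1.** Let `Z_1, …, Z_K` and
`ε_1, …, ε_K` be such that all `2K` variables are mutually independent, the `Z_i`
are i.i.d. centered Gaussian, the `ε_i` are i.i.d. centered Gaussian, `α ∈ ℝ`,
`K ≥ 2`. Then
`Var((1/K)Σᵢ(Zᵢ − αZᵢ)) · Var((1/K)Σᵢ εᵢ)
  ≤ Var((1/K)Σᵢ εᵢ·((1/(K−1))Σ_{j≠i} Zⱼ − αZᵢ))`. -/
theorem variance_crossterm_ineq_gaussian
    {Ω : Type*} [MeasurableSpace Ω] (μ : Measure Ω) [IsProbabilityMeasure μ]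
    (K : ℕ) (hK : 2 ≤ K) (Z ε : Fin K → Ω → ℝ) (α : ℝ)
    (measZ : ∀ i, Measurable (Z i)) (measε : ∀ i, Measurable (ε i))
    (hindep : iIndepFun (Sum.elim Z ε) μ)
    (vZ vε : ℝ≥0)
    (hgaussZ : ∀ i, μ.map (Z i) = gaussianReal 0 vZ)
    (hgaussε : ∀ i, μ.map (ε i) = gaussianReal 0 vε) :
    variance (fun ω => (K : ℝ)⁻¹ * ∑ i, (Z i ω - α * Z i ω)) μ *
        variance (fun ω => (K : ℝ)⁻¹ * ∑ i, ε i ω) μ ≤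
      variance (fun ω => (K : ℝ)⁻¹ * ∑ i, ε i ω *
        (((K : ℝ) - 1)⁻¹ * ∑ j ∈ Finset.univ.erase i, Z j ω - α * Z i ω)) μ :=
  variance_crossterm_ineq_gaussian_general μ K hK Z ε α hindep vZ vε hgaussZ hgaussε
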